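/- arXiv:1210.6749 — 2 statements merged into one kernel-verified Lean document; each statement's English description precedes it below -/
import Mathlib

section
/- (Wilker-type inequality.) Let p > 1. Then for all x > 0, (sinh_p(x)/x)^p + tanh_p(x)/x > 2. -/
open Real Set Filter Topology

/-- Generalized inverse sine: `arcsin_p x = ∫₀ˣ (1 - tᵖ)^(-1/p) dt`. -/
noncomputable def arcsinp (p : ℝ) (x : ℝ) : ℝ := ∫ t in (0:ℝ)..x, (1 - t ^ p) ^ (-1 / p)

/-- Generalized π: `π_p = 2 · arcsin_p 1`. -/
noncomputable def pip (p : ℝ) : ℝ := 2 * arcsinp p 1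

/-- Generalized sine: the inverse of `arcsinp p` (as a map from `[0,1]`). -/
noncomputable def sinp (p : ℝ) : ℝ → ℝ := Function.invFunOn (arcsinp p) (Set.Icc 0 1)

/-- Generalized cosine. -/
noncomputable def cosp (p : ℝ) (x : ℝ) : ℝ := (1 - (sinp p x) ^ p) ^ (1 / p)

/-- Generalized tangent. -/
noncomputable def tanp (p : ℝ) (x : ℝ) : ℝ := sinp p x / cosp p x

/-- Generalized inverse hyperbolic sine: `arsinh_p x = ∫₀ˣ (1 + tᵖ)^(-1/p) dt`. -/
noncomputable def arsinhp (p : ℝ) (x : ℝ) : ℝ := ∫ t in (0:ℝ)..x, (1 + t ^ p) ^ (-1 / p)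

/-- Generalized hyperbolic sine: the inverse of `arsinhp p` (as a map from `[0,∞)`). -/
noncomputable def sinhp (p : ℝ) : ℝ → ℝ := Function.invFunOn (arsinhp p) (Set.Ici 0)

/-- Generalized hyperbolic cosine. -/
noncomputable def coshp (p : ℝ) (x : ℝ) : ℝ := (1 + (sinhp p x) ^ p) ^ (1 / p)

/-- Generalized hyperbolic tangent. -/
noncomputable def tanhp (p : ℝ) (x : ℝ) : ℝ := sinhp p x / coshp p x

/-!
Put `s = sinh_p x`, so that `x = arsinh_p s` (`arsinh_p` maps `[0, ∞)` onto itself, since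
`arsinh_p y ≥ log (1 + y)`). Comparing derivatives, Bernoulli's inequality gives
`arsinh_p s < s (1 + s^p)^(-1/(p(p+1)))`, i.e. `s / x > t^(1/p)` with `t = cosh_p(x)^(p/(p+1))`.
Hence `(s/x)^p > t` and `tanh_p x / x > t⁻¹`, and `t + t⁻¹ ≥ 2`.
-/

open MeasureTheory intervalIntegral

section

variable {p : ℝ}

lemma one_add_rpow_pos {t : ℝ} (ht : 0 ≤ t) : 0 < 1 + t ^ p := by
  have := rpow_nonneg ht p
  linarith

lemma continuousAt_one_add_rpow_rpow (hp : 0 ≤ p) (r : ℝ) {t : ℝ} (ht : 0 ≤ t) :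
    ContinuousAt (fun t : ℝ => (1 + t ^ p) ^ r) t :=
  (continuousAt_const.add (continuousAt_rpow_const t p (Or.inr hp))).rpow_const
    (Or.inl (one_add_rpow_pos ht).ne')

lemma continuousOn_one_add_rpow_rpow (hp : 0 ≤ p) (r : ℝ) :
    ContinuousOn (fun t : ℝ => (1 + t ^ p) ^ r) (Ici 0) :=
  fun _ ht => (continuousAt_one_add_rpow_rpow hp r ht).continuousWithinAt

lemma hasDerivAt_mul_one_add_rpow_rpow (r : ℝ) {y : ℝ} (hy : 0 < y) :
    HasDerivAt (fun y : ℝ => y * (1 + y ^ p) ^ r)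
      ((1 + y ^ p) ^ (r - 1) * (1 + (1 + r * p) * y ^ p)) y := by
  have hu := one_add_rpow_pos (p := p) hy.le
  have h := (hasDerivAt_id y).mul
    (((hasDerivAt_rpow_const (p := p) (Or.inl hy.ne')).const_add 1).rpow_const
      (p := r) (Or.inl hu.ne'))
  refine h.congr_deriv ?_
  have hyy : y * y ^ (p - 1) = y ^ p := by
    rw [rpow_sub_one hy.ne']; field_simp
  have hur : (1 + y ^ p) ^ r = (1 + y ^ p) ^ (r - 1) * (1 + y ^ p) := by
    rw [← rpow_add_one hu.ne']; ring_nf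
  rw [hur, id]
  linear_combination (1 + y ^ p) ^ (r - 1) * r * p * hyy

lemma arsinhp_zero : arsinhp p 0 = 0 := integral_same

lemma hasDerivAt_arsinhp (hp : 0 ≤ p) {y : ℝ} (hy : 0 < y) :
    HasDerivAt (arsinhp p) ((1 + y ^ p) ^ (-1 / p)) y :=
  integral_hasDerivAt_right
    ((continuousOn_one_add_rpow_rpow hp _).mono Icc_subset_Ici_self
      |>.intervalIntegrable_of_Icc hy.le)
    ⟨Ioi 0, Ioi_mem_nhds hy, ((continuousOn_one_add_rpow_rpow hp _).mono
      Ioi_subset_Ici_self).aestronglyMeasurable measurableSet_Ioi⟩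
    (continuousAt_one_add_rpow_rpow hp _ hy.le)

lemma continuousOn_arsinhp (hp : 0 ≤ p) (Y : ℝ) : ContinuousOn (arsinhp p) (Icc 0 Y) :=
  (continuousOn_primitive (((continuousOn_one_add_rpow_rpow hp _).mono
    Icc_subset_Ici_self).integrableOn_Icc)).congr fun _ hx => integral_of_le hx.1

lemma log_one_add_le_arsinhp (hp : 1 ≤ p) {y : ℝ} (hy : 0 ≤ y) : log (1 + y) ≤ arsinhp p y := by
  have hp0 : 0 ≤ p := zero_le_one.trans hp
  have hlog : ∫ t in (0:ℝ)..y, (1 + t)⁻¹ = log (1 + y) := by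
    rw [integral_comp_add_left (fun t : ℝ => t⁻¹) 1,
      integral_inv (by rw [uIcc_of_le (by linarith)]; exact fun h => by linarith [h.1])]
    norm_num
  rw [← hlog]
  refine integral_mono_on hy ?_ ?_ fun t ht => ?_
  · exact (continuousOn_const.add continuousOn_id |>.inv₀ fun t ht =>
      (by linarith [ht.1] : (0:ℝ) < 1 + t).ne')
      |>.intervalIntegrable_of_Icc hy
  · exact (continuousOn_one_add_rpow_rpow hp0 _).mono Icc_subset_Ici_self
      |>.intervalIntegrable_of_Icc hy
  · have hMink : 1 + t ^ p ≤ (1 + t) ^ p := by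
      simpa using add_rpow_le_rpow_add zero_le_one ht.1 hp
    calc (1 + t)⁻¹ = ((1 + t) ^ p) ^ (-1 / p) := by
          rw [← rpow_mul (by linarith [ht.1]), mul_div_cancel₀ _ (by linarith), rpow_neg_one]
      _ ≤ (1 + t ^ p) ^ (-1 / p) :=
          rpow_le_rpow_of_nonpos (one_add_rpow_pos ht.1) hMink
            (div_nonpos_of_nonpos_of_nonneg (by norm_num) hp0)

lemma exists_arsinhp_eq (hp : 1 ≤ p) {x : ℝ} (hx : 0 ≤ x) : ∃ y ∈ Ici 0, arsinhp p y = x := by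
  have hx' : x ≤ arsinhp p (exp x) := by
    calc x = log (exp x) := (log_exp x).symm
      _ ≤ log (1 + exp x) := log_le_log (exp_pos x) (by linarith)
      _ ≤ arsinhp p (exp x) := log_one_add_le_arsinhp hp (exp_pos x).le
  obtain ⟨y, hy, rfl⟩ := intermediate_value_Icc (exp_pos x).le
    (continuousOn_arsinhp (zero_le_one.trans hp) _) ⟨by rwa [arsinhp_zero], hx'⟩
  exact ⟨y, hy.1, rfl⟩

lemma arsinhp_sinhp (hp : 1 ≤ p) {x : ℝ} (hx : 0 ≤ x) : arsinhp p (sinhp p x) = x :=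
  Function.invFunOn_eq (exists_arsinhp_eq hp hx)

lemma sinhp_pos (hp : 1 ≤ p) {x : ℝ} (hx : 0 < x) : 0 < sinhp p x := by
  refine lt_of_le_of_ne (Function.invFunOn_mem (exists_arsinhp_eq hp hx.le)) fun h => ?_
  have := arsinhp_sinhp hp hx.le
  rw [← h, arsinhp_zero] at this
  exact hx.ne this

/-- Bernoulli's inequality `u ^ α < 1 + α (u - 1)` with `α = p / (p + 1)`, rearranged. -/
lemma rpow_neg_inv_lt (hp : 0 < p) {u : ℝ} (hu : 1 < u) :
    u ^ (-1 / p) < u ^ (-(p * (p + 1))⁻¹ - 1) * (1 + p / (p + 1) * (u - 1)) := by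
  have hu0 : 0 < u := zero_lt_one.trans hu
  have hbern : u ^ (p / (p + 1)) < 1 + p / (p + 1) * (u - 1) := by
    simpa using rpow_one_add_lt_one_add_mul_self (s := u - 1) (by linarith)
      (by linarith) (by positivity) ((div_lt_one (by linarith)).2 (by linarith))
  calc u ^ (-1 / p) = u ^ (-(p * (p + 1))⁻¹ - 1) * u ^ (p / (p + 1)) := by
        rw [← rpow_add hu0]; congr 1; field_simp; ring
    _ < _ := mul_lt_mul_of_pos_left hbern (rpow_pos_of_pos hu0 _)

lemma arsinhp_lt_mul_one_add_rpow (hp : 0 < p) {y : ℝ} (hy : 0 < y) :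
    arsinhp p y < y * (1 + y ^ p) ^ (-(p * (p + 1))⁻¹) := by
  set g : ℝ → ℝ := fun y => y * (1 + y ^ p) ^ (-(p * (p + 1))⁻¹)
  have hg : ContinuousOn g (Icc 0 y) := fun t ht =>
    (continuousAt_id.mul (continuousAt_one_add_rpow_rpow hp.le _ ht.1)).continuousWithinAt
  have hmono : StrictMonoOn (g - arsinhp p) (Icc 0 y) := by
    refine strictMonoOn_of_deriv_pos (convex_Icc 0 y) (hg.sub (continuousOn_arsinhp hp.le y))
      fun t ht => ?_
    rw [interior_Icc] at ht
    have hcoef : 1 + -(p * (p + 1))⁻¹ * p = p / (p + 1) := by field_simp; ring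
    rw [((hasDerivAt_mul_one_add_rpow_rpow _ ht.1).sub (hasDerivAt_arsinhp hp.le ht.1)).deriv,
      hcoef, sub_pos]
    simpa using rpow_neg_inv_lt hp (u := 1 + t ^ p) (by linarith [rpow_pos_of_pos ht.1 p])
  simpa [g, arsinhp_zero] using
    hmono (left_mem_Icc.2 hy.le) (right_mem_Icc.2 hy.le) hy

lemma two_lt_rpow_add_of_lt {s x u : ℝ} (hp : 0 < p) (hx : 0 < x) (hu : 0 < u)
    (h : x < s * u ^ (-(p * (p + 1))⁻¹)) : 2 < (s / x) ^ p + s / u ^ (1 / p) / x := by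
  have hratio : u ^ (p * (p + 1))⁻¹ < s / x := by
    rw [lt_div_iff₀ hx]
    calc u ^ (p * (p + 1))⁻¹ * x < u ^ (p * (p + 1))⁻¹ * (s * u ^ (-(p * (p + 1))⁻¹)) :=
          mul_lt_mul_of_pos_left h (rpow_pos_of_pos hu _)
      _ = s := by rw [rpow_neg hu.le]; field_simp
  set t := u ^ (p + 1)⁻¹
  have ht : 0 < t := rpow_pos_of_pos hu _
  have hA : t < (s / x) ^ p := by
    calc t = (u ^ (p * (p + 1))⁻¹) ^ p := by
          rw [← rpow_mul hu.le, show (p * (p + 1))⁻¹ * p = (p + 1)⁻¹ by field_simp]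
      _ < (s / x) ^ p := rpow_lt_rpow (rpow_pos_of_pos hu _).le hratio hp
  have hB : t⁻¹ < s / u ^ (1 / p) / x := by
    calc t⁻¹ = u ^ (p * (p + 1))⁻¹ / u ^ (1 / p) := by
          rw [← rpow_neg hu.le, ← rpow_sub hu]; congr 1; field_simp; ring
      _ < s / x / u ^ (1 / p) := by gcongr
      _ = s / u ^ (1 / p) / x := div_right_comm _ _ _
  have hAMGM : 2 ≤ t + t⁻¹ := by
    have := sq_nonneg (t - 1)
    field_simp
    nlinarith
  linarith

end

theorem stmt10 (p : ℝ) (hp : 1 < p) :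
    ∀ x > (0:ℝ), (sinhp p x / x) ^ p + tanhp p x / x > 2 := by
  intro x hx
  have hkey := arsinhp_lt_mul_one_add_rpow (zero_lt_one.trans hp) (sinhp_pos hp.le hx)
  rw [arsinhp_sinhp hp.le hx.le] at hkey
  exact two_lt_rpow_add_of_lt (zero_lt_one.trans hp) hx
    (one_add_rpow_pos (sinhp_pos hp.le hx).le) hkey
end

section
/- (Cusa–Huygens-type inequality.) Let 1 < p ≤ 2. Then for all x ∈ (0, π_p/2], sin_p(x)/x < (cos_p(x) + p)/(1 + p) ≤ (cos_p(x) + 2)/3. -/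
open Real Set Filter Topology

/-!
Put `σ = sin_p x`, so that `x = arcsin_p σ` and `cos_p x = (1 - σ^p)^(1/p)`. The first inequality
says that `Φ(σ) = (cos_p x + p) · arcsin_p σ - (1 + p) σ` (`cusaDefect`) is positive on `(0, 1]`.
As `Φ(0) = 0`, it suffices that `Φ' > 0`, and `Φ' = Ψ · (1 - σ^p)^(-1/p)` with `Ψ(0) = 0`
(`Ψ = cusaDefectDerivNumer`). Finally `Ψ' > 0` because the integrand of `arcsin_p` is increasing,
so `arcsin_p σ < σ (1 - σ^p)^(-1/p)`, and because `p ≤ 2`. The second inequality is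
`(2 - p)(1 - cos_p x) ≥ 0`.
-/

open MeasureTheory

lemma lt_of_hasDerivAt_pos {f f' : ℝ → ℝ} {a b : ℝ} (hf : ContinuousOn f (Icc a b))
    (hf' : ∀ τ ∈ Ioo a b, HasDerivAt f (f' τ) τ) (hpos : ∀ τ ∈ Ioo a b, 0 < f' τ)
    {σ : ℝ} (hσ : σ ∈ Ioc a b) : f a < f σ := by
  refine strictMonoOn_of_deriv_pos (convex_Icc a b) hf (fun τ hτ => ?_)
    (left_mem_Icc.2 (hσ.1.le.trans hσ.2)) (Ioc_subset_Icc_self hσ) hσ.1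
  rw [interior_Icc] at hτ
  rw [(hf' τ hτ).deriv]
  exact hpos τ hτ

lemma add_div_one_add_le_add_two_div_three {c q : ℝ} (hc : c ≤ 1) (hq : -1 < q) (hq2 : q ≤ 2) :
    (c + q) / (1 + q) ≤ (c + 2) / 3 := by
  rw [div_le_div_iff₀ (by linarith) (by norm_num)]
  nlinarith [mul_nonneg (sub_nonneg.2 hq2) (sub_nonneg.2 hc)]

section

variable {p : ℝ}

lemma one_sub_rpow_pos (hp : 0 < p) {t : ℝ} (ht0 : 0 ≤ t) (ht1 : t < 1) : 0 < 1 - t ^ p :=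
  sub_pos.2 (rpow_lt_one ht0 ht1 hp)

lemma hasDerivAt_one_sub_rpow {σ : ℝ} (hσ : 0 < σ) :
    HasDerivAt (fun σ : ℝ => 1 - σ ^ p) (-(p * σ ^ (p - 1))) σ :=
  (hasDerivAt_rpow_const (Or.inl hσ.ne')).const_sub 1

lemma intervalIntegrable_arcsinp_integrand (hp : 1 < p) :
    IntervalIntegrable (fun t : ℝ => (1 - t ^ p) ^ (-1 / p)) volume 0 1 := by
  have hp0 : 0 < p := by linarith
  have hexp : -1 / p ≤ 0 := div_nonpos_of_nonpos_of_nonneg (by norm_num) hp0.le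
  -- `1 - t ^ p ≥ 1 - t` on `[0, 1]`, and `(1 - t) ^ (-1 / p)` is integrable since `-1 / p > -1`
  have hdom : IntervalIntegrable (fun t : ℝ => (1 - t) ^ (-1 / p)) volume 0 1 := by
    have h : -1 < -1 / p := by rw [neg_div, neg_lt_neg_iff, div_lt_one hp0]; exact hp
    simpa using ((intervalIntegral.intervalIntegrable_rpow' (a := 0) (b := 1) h).comp_sub_left
      1).symm
  refine hdom.mono_fun (Measurable.aestronglyMeasurable (by fun_prop)) ?_
  rw [EventuallyLE, ae_restrict_iff' measurableSet_uIoc, uIoc_of_le zero_le_one]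
  filter_upwards with t ⟨ht0, ht1⟩
  have htp : t ^ p ≤ 1 := rpow_le_one ht0.le ht1 hp0.le
  rw [norm_of_nonneg (rpow_nonneg (by linarith) _), norm_of_nonneg (rpow_nonneg (by linarith) _)]
  rcases ht1.lt_or_eq with ht1 | rfl
  · exact rpow_le_rpow_of_nonpos (by linarith)
      (by linarith [rpow_le_self_of_le_one ht0.le ht1.le hp.le]) hexp
  · simp

lemma intervalIntegrable_arcsinp_integrand_of_mem (hp : 1 < p) {a b : ℝ}
    (ha : a ∈ Icc (0 : ℝ) 1) (hb : b ∈ Icc (0 : ℝ) 1) :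
    IntervalIntegrable (fun t : ℝ => (1 - t ^ p) ^ (-1 / p)) volume a b :=
  (intervalIntegrable_arcsinp_integrand hp).mono_set <| by
    rw [uIcc_of_le zero_le_one]
    exact uIcc_subset_Icc ha hb

lemma arcsinp_zero : arcsinp p 0 = 0 := intervalIntegral.integral_same

lemma strictMonoOn_arcsinp (hp : 1 < p) : StrictMonoOn (arcsinp p) (Icc 0 1) := by
  intro a ha b hb hab
  have hsplit : arcsinp p a + ∫ t in a..b, (1 - t ^ p) ^ (-1 / p) = arcsinp p b :=
    intervalIntegral.integral_add_adjacent_intervals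
      (intervalIntegrable_arcsinp_integrand_of_mem hp (left_mem_Icc.2 zero_le_one) ha)
      (intervalIntegrable_arcsinp_integrand_of_mem hp ha hb)
  have hpos : 0 < ∫ t in a..b, (1 - t ^ p) ^ (-1 / p) :=
    intervalIntegral.intervalIntegral_pos_of_pos_on
      (intervalIntegrable_arcsinp_integrand_of_mem hp ha hb)
      (fun t ht => rpow_pos_of_pos (one_sub_rpow_pos (by linarith) (ha.1.trans ht.1.le)
        (ht.2.trans_le hb.2)) _) hab
  linarith

lemma arcsinp_pos (hp : 1 < p) {σ : ℝ} (hσ : σ ∈ Ioc 0 1) : 0 < arcsinp p σ := by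
  simpa [arcsinp_zero] using
    strictMonoOn_arcsinp hp (left_mem_Icc.2 zero_le_one) (Ioc_subset_Icc_self hσ) hσ.1

lemma continuousOn_arcsinp (hp : 1 < p) : ContinuousOn (arcsinp p) (Icc 0 1) := by
  have h := intervalIntegral.continuousOn_primitive_interval (μ := volume) <|
    (intervalIntegrable_iff_integrableOn_Icc_of_le zero_le_one).1
      (intervalIntegrable_arcsinp_integrand hp) |>.mono_set (uIcc_of_le zero_le_one).subset
  rwa [uIcc_of_le zero_le_one] at h

lemma hasDerivAt_arcsinp (hp : 1 < p) {σ : ℝ} (hσ : σ ∈ Ioo 0 1) :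
    HasDerivAt (arcsinp p) ((1 - σ ^ p) ^ (-1 / p)) σ :=
  intervalIntegral.integral_hasDerivAt_right
    (intervalIntegrable_arcsinp_integrand_of_mem hp (left_mem_Icc.2 zero_le_one)
      (Ioo_subset_Icc_self hσ))
    (Measurable.aestronglyMeasurable (by fun_prop)).stronglyMeasurableAtFilter
    ((continuousAt_const.sub (continuousAt_rpow_const σ p (Or.inl hσ.1.ne'))).rpow_const
      (Or.inl (one_sub_rpow_pos (by linarith) hσ.1.le hσ.2).ne'))

lemma arcsinp_lt_mul (hp : 1 < p) {σ : ℝ} (hσ : σ ∈ Ioo 0 1) :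
    arcsinp p σ < σ * (1 - σ ^ p) ^ (-1 / p) := by
  have hp0 : 0 < p := by linarith
  set M := (1 - σ ^ p) ^ (-1 / p)
  have hint := intervalIntegrable_arcsinp_integrand_of_mem hp (left_mem_Icc.2 zero_le_one)
    (Ioo_subset_Icc_self hσ)
  have hpos : 0 < ∫ t in (0 : ℝ)..σ, (M - (1 - t ^ p) ^ (-1 / p)) := by
    refine intervalIntegral.intervalIntegral_pos_of_pos_on (intervalIntegrable_const.sub hint)
      (fun t ht => sub_pos.2 ?_) hσ.1
    exact rpow_lt_rpow_of_neg (one_sub_rpow_pos hp0 hσ.1.le hσ.2)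
      (by linarith [rpow_lt_rpow ht.1.le ht.2 hp0])
      (div_neg_of_neg_of_pos (by norm_num) hp0)
  rw [intervalIntegral.integral_sub intervalIntegrable_const hint,
    intervalIntegral.integral_const, smul_eq_mul, sub_zero] at hpos
  exact sub_pos.1 hpos

lemma exists_arcsinp_eq (hp : 1 < p) {x : ℝ} (hx : x ∈ Icc 0 (pip p / 2)) :
    ∃ σ ∈ Icc (0 : ℝ) 1, arcsinp p σ = x := by
  refine intermediate_value_Icc zero_le_one (continuousOn_arcsinp hp) ?_
  rwa [arcsinp_zero, ← mul_div_cancel_left₀ (arcsinp p 1) two_ne_zero]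

lemma sinp_mem_Icc (hp : 1 < p) {x : ℝ} (hx : x ∈ Icc 0 (pip p / 2)) :
    sinp p x ∈ Icc (0 : ℝ) 1 :=
  Function.invFunOn_mem (exists_arcsinp_eq hp hx)

lemma arcsinp_sinp (hp : 1 < p) {x : ℝ} (hx : x ∈ Icc 0 (pip p / 2)) :
    arcsinp p (sinp p x) = x :=
  Function.invFunOn_eq (exists_arcsinp_eq hp hx)

lemma sinp_mem_Ioc (hp : 1 < p) {x : ℝ} (hx : x ∈ Ioc 0 (pip p / 2)) :
    sinp p x ∈ Ioc (0 : ℝ) 1 := by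
  obtain ⟨h0, h1⟩ := sinp_mem_Icc hp (Ioc_subset_Icc_self hx)
  refine ⟨h0.lt_of_ne fun h => hx.1.ne' ?_, h1⟩
  rw [← arcsinp_sinp hp (Ioc_subset_Icc_self hx), ← h, arcsinp_zero]

noncomputable def cosOfSin (p σ : ℝ) : ℝ := (1 - σ ^ p) ^ (1 / p)

lemma cosOfSin_sinp (p x : ℝ) : cosOfSin p (sinp p x) = cosp p x := rfl

lemma continuousOn_cosOfSin (hp : 0 < p) : ContinuousOn (cosOfSin p) (Icc 0 1) :=
  fun σ _ => ((continuousAt_const.sub (continuousAt_rpow_const σ p (Or.inr hp.le))).rpow_const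
    (Or.inr (by positivity))).continuousWithinAt

lemma hasDerivAt_cosOfSin (hp : 0 < p) {σ : ℝ} (hσ : σ ∈ Ioo 0 1) :
    HasDerivAt (cosOfSin p) (-(σ ^ (p - 1) * (1 - σ ^ p) ^ (1 / p - 1))) σ := by
  refine ((hasDerivAt_one_sub_rpow hσ.1).rpow_const (p := 1 / p)
    (Or.inl (one_sub_rpow_pos hp hσ.1.le hσ.2).ne')).congr_deriv ?_
  field_simp

noncomputable def cusaDefectDerivNumer (p σ : ℝ) : ℝ :=
  p * (1 - cosOfSin p σ) - σ ^ (p - 1) * (1 - σ ^ p) ^ ((2 - p) / p) * arcsinp p σ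

lemma continuousOn_cusaDefectDerivNumer (hp : 1 < p) (hp2 : p ≤ 2) :
    ContinuousOn (cusaDefectDerivNumer p) (Icc 0 1) := by
  have hweight : ContinuousOn (fun σ : ℝ => σ ^ (p - 1) * (1 - σ ^ p) ^ ((2 - p) / p)) (Icc 0 1) :=
    fun σ _ => ((continuousAt_rpow_const σ (p - 1) (Or.inr (by linarith))).mul
      ((continuousAt_const.sub (continuousAt_rpow_const σ p (Or.inr (by linarith)))).rpow_const
        (Or.inr (div_nonneg (by linarith) (by linarith))))).continuousWithinAt
  exact (continuousOn_const.mul (continuousOn_const.sub (continuousOn_cosOfSin (by linarith)))).sub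
    (hweight.mul (continuousOn_arcsinp hp))

lemma hasDerivAt_cusaDefectDerivNumer (hp : 1 < p) {σ : ℝ} (hσ : σ ∈ Ioo 0 1) :
    HasDerivAt (cusaDefectDerivNumer p)
      ((p - 1) * σ ^ (p - 2) * (1 - σ ^ p) ^ ((2 - p) / p) *
          (σ * (1 - σ ^ p) ^ (-1 / p) - arcsinp p σ) +
        (2 - p) * (σ ^ (p - 1)) ^ 2 * (1 - σ ^ p) ^ ((2 - p) / p - 1) * arcsinp p σ) σ := by
  have hp0 : 0 < p := by linarith
  have hu := one_sub_rpow_pos hp0 hσ.1.le hσ.2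
  have hpow : HasDerivAt (fun σ : ℝ => σ ^ (p - 1)) ((p - 1) * σ ^ (p - 1 - 1)) σ :=
    hasDerivAt_rpow_const (Or.inl hσ.1.ne')
  have hweight := (hasDerivAt_one_sub_rpow hσ.1).rpow_const (p := (2 - p) / p) (Or.inl hu.ne')
  refine (((hasDerivAt_cosOfSin hp0 hσ).const_sub 1).const_mul p |>.sub
    ((hpow.mul hweight).mul (hasDerivAt_arcsinp hp hσ))).congr_deriv ?_
  simp only [Pi.mul_apply]
  set u := 1 - σ ^ p
  have hσpow : σ ^ (p - 1 - 1) * σ = σ ^ (p - 1) := by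
    rw [← rpow_add_one hσ.1.ne']; ring_nf
  have hupow : u ^ ((2 - p) / p) * u ^ (-1 / p) = u ^ (1 / p - 1) := by
    rw [← rpow_add hu]; congr 1; field_simp; ring
  rw [show p - 2 = p - 1 - 1 by ring, ← hσpow, ← hupow]
  field_simp
  ring

lemma cusaDefectDerivNumer_pos (hp : 1 < p) (hp2 : p ≤ 2) {σ : ℝ} (hσ : σ ∈ Ioc 0 1) :
    0 < cusaDefectDerivNumer p σ := by
  have hp0 : 0 < p := by linarith
  have hzero : cusaDefectDerivNumer p 0 = 0 := by
    simp [cusaDefectDerivNumer, cosOfSin, zero_rpow hp0.ne', arcsinp_zero]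
  rw [← hzero]
  refine lt_of_hasDerivAt_pos (continuousOn_cusaDefectDerivNumer hp hp2)
    (fun τ hτ => hasDerivAt_cusaDefectDerivNumer hp hτ) (fun τ hτ => ?_) hσ
  have hτ0 : 0 < τ := hτ.1
  have hu := one_sub_rpow_pos hp0 hτ.1.le hτ.2
  have hA := arcsinp_pos hp (Ioo_subset_Ioc_self hτ)
  have htangent := sub_pos.2 (arcsinp_lt_mul hp hτ)
  have hp1 : 0 < p - 1 := by linarith
  have hp2' : 0 ≤ 2 - p := by linarith
  positivity

noncomputable def cusaDefect (p σ : ℝ) : ℝ := (cosOfSin p σ + p) * arcsinp p σ - (1 + p) * σ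

lemma continuousOn_cusaDefect (hp : 1 < p) : ContinuousOn (cusaDefect p) (Icc 0 1) :=
  (((continuousOn_cosOfSin (by linarith)).add continuousOn_const).mul
    (continuousOn_arcsinp hp)).sub (continuousOn_const.mul continuousOn_id)

lemma hasDerivAt_cusaDefect (hp : 1 < p) {σ : ℝ} (hσ : σ ∈ Ioo 0 1) :
    HasDerivAt (cusaDefect p) (cusaDefectDerivNumer p σ * (1 - σ ^ p) ^ (-1 / p)) σ := by
  have hp0 : 0 < p := by linarith
  have hu := one_sub_rpow_pos hp0 hσ.1.le hσ.2
  refine (((hasDerivAt_cosOfSin hp0 hσ).add_const p).mul (hasDerivAt_arcsinp hp hσ) |>.sub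
    ((hasDerivAt_id σ).const_mul (1 + p))).congr_deriv ?_
  simp only [cusaDefectDerivNumer, cosOfSin]
  set u := 1 - σ ^ p
  have hinv : u ^ (1 / p) * u ^ (-1 / p) = 1 := by
    rw [← rpow_add hu, show 1 / p + -1 / p = 0 by ring, rpow_zero]
  have hupow : u ^ ((2 - p) / p) * u ^ (-1 / p) = u ^ (1 / p - 1) := by
    rw [← rpow_add hu]; congr 1; field_simp; ring
  linear_combination (1 + p) * hinv + σ ^ (p - 1) * arcsinp p σ * hupow

lemma cusaDefect_pos (hp : 1 < p) (hp2 : p ≤ 2) {σ : ℝ} (hσ : σ ∈ Ioc 0 1) :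
    0 < cusaDefect p σ := by
  have hzero : cusaDefect p 0 = 0 := by simp [cusaDefect, arcsinp_zero]
  rw [← hzero]
  exact lt_of_hasDerivAt_pos (continuousOn_cusaDefect hp)
    (fun τ hτ => hasDerivAt_cusaDefect hp hτ)
    (fun τ hτ => mul_pos (cusaDefectDerivNumer_pos hp hp2 (Ioo_subset_Ioc_self hτ))
      (rpow_pos_of_pos (one_sub_rpow_pos (by linarith) hτ.1.le hτ.2) _)) hσ

end

theorem stmt11 (p : ℝ) (hp1 : 1 < p) (hp2 : p ≤ 2) :
    ∀ x ∈ Set.Ioc 0 (pip p / 2),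
      sinp p x / x < (cosp p x + p) / (1 + p) ∧
      (cosp p x + p) / (1 + p) ≤ (cosp p x + 2) / 3 := by
  intro x hx
  have hσ := sinp_mem_Ioc hp1 hx
  have hdefect := cusaDefect_pos hp1 hp2 hσ
  rw [cusaDefect, cosOfSin_sinp, arcsinp_sinp hp1 (Ioc_subset_Icc_self hx), sub_pos] at hdefect
  have hcos_le : cosp p x ≤ 1 :=
    rpow_le_one (sub_nonneg.2 (rpow_le_one hσ.1.le hσ.2 (by linarith)))
      (sub_le_self _ (rpow_nonneg hσ.1.le _)) (by positivity)
  refine ⟨?_, add_div_one_add_le_add_two_div_three hcos_le (by linarith) hp2⟩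
  rw [div_lt_div_iff₀ hx.1 (by linarith)]
  linarith
end
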